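/- Let h ≥ 2 and let B_1, B_2, …, B_{h+2} be independent random variables, each uniformly distributed on the integers {0, 1, …, 255}. Conditioning on the event that B_1 fails the matching condition, i.e., B_1 < max{B_2, …, B_{h+1}}, shifts the expectations of B_2 and of max{B_3, …, B_{h+2}} towards higher values: E(B_2 ∣ B_1 < max{B_2, …, B_{h+1}}) ≥ E(B_2) = 255/2, and E(max{B_3, …, B_{h+2}} ∣ B_1 < max{B_2, …, B_{h+1}}) ≥ E(max{B_3, …, B_{h+2}}). -/

import Mathlib

/-!
Reversing the order of the first byte turns the event `B₁ < max {B₂, …, B_{h+1}}` into an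
increasing event on the product lattice `Fin (h + 2) → Fin 256`, and leaves `B₂` and
`max {B₃, …, B_{h+2}}`, which are increasing and do not involve `B₁`, unchanged. By Harris'
inequality (FKG with constant weight) increasing functions are positively correlated under the
uniform law of the bytes, so conditioning on an increasing event of positive probability can only
raise the expectation of an increasing function.
-/

open MeasureTheory ProbabilityTheory Finset
open scoped ENNReal

theorem sum_mul_sum_le_card_mul_sum_mul {α : Type*} [DistribLattice α] [Fintype α]
    {f g : α → ℝ} (hf₀ : 0 ≤ f) (hg₀ : 0 ≤ g) (hf : Monotone f) (hg : Monotone g) :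
    (∑ a, f a) * ∑ a, g a ≤ Fintype.card α * ∑ a, f a * g a := by
  simpa using fkg f g 1 zero_le_one hf₀ hg₀ hf hg fun _ _ ↦ by simp

theorem sum_mul_card_le_card_mul_sum_of_isUpperSet {α : Type*} [DistribLattice α] [Fintype α]
    {f : α → ℝ} (hf₀ : 0 ≤ f) (hf : Monotone f) {s : Finset α} (hs : IsUpperSet (s : Set α)) :
    (∑ a, f a) * #s ≤ Fintype.card α * ∑ a ∈ s, f a := by
  classical
  have hind : Monotone fun a ↦ if a ∈ s then (1 : ℝ) else 0 := by
    intro a b hab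
    by_cases ha : a ∈ s
    · simp [ha, show b ∈ s from hs hab ha]
    · simp only [ha, if_false]
      split_ifs <;> norm_num
  have := sum_mul_sum_le_card_mul_sum_mul hf₀ (fun a ↦ by dsimp; split_ifs <;> norm_num) hf hind
  simpa [sum_boole, ← sum_filter] using this

theorem sum_mul_card_le_card_mul_sum_of_reversed_coord {ι : Type*} [Fintype ι] [DecidableEq ι]
    {m : ℕ} (i₀ : ι) {f : (ι → Fin m) → ℝ} (hf₀ : 0 ≤ f) (hf : Monotone f)
    (hf_i₀ : ∀ x a, f (Function.update x i₀ a) = f x) {s : Finset (ι → Fin m)}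
    (hs : ∀ x ∈ s, ∀ y, (∀ i ≠ i₀, x i ≤ y i) → y i₀ ≤ x i₀ → y ∈ s) :
    (∑ x, f x) * #s ≤ Fintype.card (ι → Fin m) * ∑ x ∈ s, f x := by
  -- Reversing coordinate `i₀` fixes `f` and maps `s` onto an upper set.
  set φ : (ι → Fin m) → (ι → Fin m) := fun x ↦ Function.update x i₀ (x i₀).rev
  have hφ : Function.Involutive φ := fun x ↦ by simp [φ]
  have hmem : ∀ x, x ∈ s.image φ ↔ φ x ∈ s := fun x ↦
    ⟨fun hx ↦ by obtain ⟨a, ha, rfl⟩ := mem_image.1 hx; rwa [hφ],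
      fun hx ↦ mem_image.2 ⟨_, hx, hφ x⟩⟩
  have hupper : IsUpperSet (s.image φ : Set (ι → Fin m)) := by
    intro x y hxy hx
    rw [mem_coe, hmem] at hx ⊢
    refine hs _ hx _ (fun i hi ↦ ?_) ?_
    · simpa [φ, hi] using hxy i
    · simpa [φ] using Fin.rev_le_rev.2 (hxy i₀)
  have := sum_mul_card_le_card_mul_sum_of_isUpperSet hf₀ hf hupper
  rwa [card_image_of_injective _ hφ.injective, sum_image hφ.injective.injOn,
    sum_congr rfl fun x _ ↦ hf_i₀ x _] at this

theorem integrableOn_count_finset {α : Type*} [MeasurableSpace α] [MeasurableSingletonClass α]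
    (s : Finset α) (g : α → ℝ) : IntegrableOn g s Measure.count := by
  have := (integrableOn_finite_biUnion s.finite_toSet).2 fun x _ ↦
    integrableOn_singleton (f := g) (μ := .count) (hx := by simp)
  rwa [Set.biUnion_of_singleton] at this

theorem integral_uniformOn_finset {α : Type*} [MeasurableSpace α] [MeasurableSingletonClass α]
    (s : Finset α) (g : α → ℝ) :
    ∫ x, g x ∂uniformOn (s : Set α) = (#s : ℝ)⁻¹ * ∑ x ∈ s, g x := by
  rw [uniformOn, ProbabilityTheory.cond, integral_smul_measure,
    setIntegral_finset _ (integrableOn_count_finset s g)]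
  simp [Measure.count_apply_finset, measureReal_def, mul_sum]

theorem uniformOn_univ_cond {α : Type*} [MeasurableSpace α] [MeasurableSingletonClass α]
    [Finite α] (s : Set α) : (uniformOn Set.univ : Measure α)[|s] = uniformOn s := by
  rw [uniformOn, cond_cond_eq_cond_inter MeasurableSet.univ s.toFinite.measurableSet,
    Set.univ_inter, uniformOn]

theorem integral_fin_val_uniformOn_univ (n : ℕ) :
    ∫ k : Fin (n + 1), ((k : ℕ) : ℝ) ∂uniformOn Set.univ = n / 2 := by
  rw [← coe_univ, integral_uniformOn_finset, card_univ, Fintype.card_fin,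
    Fin.sum_univ_eq_sum_range (fun i ↦ (i : ℝ))]
  have hgauss := congrArg (Nat.cast : ℕ → ℝ) (sum_range_id_mul_two (n + 1))
  push_cast [Nat.add_sub_cancel] at hgauss
  field_simp
  push_cast
  linarith

theorem map_cond_preimage {Ω β : Type*} [MeasurableSpace Ω] [MeasurableSpace β] {μ : Measure Ω}
    {T : Ω → β} (hT : Measurable T) {s : Set β} (hs : MeasurableSet s) :
    (μ[|T ⁻¹' s]).map T = (μ.map T)[|s] := by
  rw [ProbabilityTheory.cond, ProbabilityTheory.cond, Measure.map_smul,
    ← Measure.restrict_map hT hs, Measure.map_apply hT hs]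

theorem integral_comp_cond_preimage {Ω β : Type*} [MeasurableSpace Ω] [MeasurableSpace β]
    [MeasurableSingletonClass β] [Countable β] {μ : Measure Ω} {T : Ω → β} (hT : Measurable T)
    (s : Set β) (f : β → ℝ) :
    ∫ ω, f (T ω) ∂μ[|T ⁻¹' s] = ∫ x, f x ∂(μ.map T)[|s] := by
  rw [← map_cond_preimage hT (s.to_countable.measurableSet),
    integral_map hT.aemeasurable (measurable_of_countable f).aestronglyMeasurable]

theorem map_eq_uniformOn_univ {Ω α : Type*} [MeasurableSpace Ω] [MeasurableSpace α]
    [MeasurableSingletonClass α] [Fintype α] {μ : Measure Ω} {X : Ω → α} (hX : Measurable X)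
    (h : ∀ a, μ (X ⁻¹' {a}) = (Fintype.card α : ℝ≥0∞)⁻¹) :
    μ.map X = uniformOn Set.univ :=
  Measure.ext_of_singleton fun a ↦ by
    rw [Measure.map_apply hX (measurableSet_singleton a), h, uniformOn_univ,
      Measure.count_singleton, ENNReal.div_eq_inv_mul, mul_one]

theorem ProbabilityTheory.iIndepFun.map_fun_eq_uniformOn_univ {Ω ι α : Type*}
    [MeasurableSpace Ω] [MeasurableSpace α] [MeasurableSingletonClass α] [Finite α] [Fintype ι]
    {μ : Measure Ω} [IsProbabilityMeasure μ] {X : ι → Ω → α} (hX : ∀ i, Measurable (X i))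
    (hind : iIndepFun X μ) (hunif : ∀ i, μ.map (X i) = uniformOn Set.univ) :
    μ.map (fun ω i ↦ X i ω) = uniformOn Set.univ := by
  rw [hind.map_fun_eq_pi_map fun i ↦ (hX i).aemeasurable, funext hunif, ← uniformOn_pi,
    Set.pi_univ]

theorem integral_comp_le_integral_comp_cond_of_reversed_coord {Ω ι : Type*} [MeasurableSpace Ω]
    [Fintype ι] [DecidableEq ι] {m : ℕ} {μ : Measure Ω} {T : Ω → ι → Fin m} (hT : Measurable T)
    (hlaw : μ.map T = uniformOn Set.univ) (i₀ : ι) {f : (ι → Fin m) → ℝ} (hf₀ : 0 ≤ f)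
    (hf : Monotone f) (hf_i₀ : ∀ x a, f (Function.update x i₀ a) = f x)
    {s : Set (ι → Fin m)} (hs_ne : s.Nonempty)
    (hs : ∀ x ∈ s, ∀ y, (∀ i ≠ i₀, x i ≤ y i) → y i₀ ≤ x i₀ → y ∈ s) :
    ∫ ω, f (T ω) ∂μ ≤ ∫ ω, f (T ω) ∂μ[|T ⁻¹' s] := by
  classical
  rw [integral_comp_cond_preimage hT, hlaw, uniformOn_univ_cond,
    ← integral_map hT.aemeasurable (measurable_of_countable f).aestronglyMeasurable, hlaw,
    ← s.coe_toFinset, ← coe_univ, integral_uniformOn_finset, integral_uniformOn_finset,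
    card_univ]
  have hflip := sum_mul_card_le_card_mul_sum_of_reversed_coord i₀ hf₀ hf hf_i₀ (s := s.toFinset)
    (by simpa using hs)
  have hcard : (0 : ℝ) < Fintype.card (ι → Fin m) := by
    exact_mod_cast Fintype.card_pos_iff.2 ⟨hs_ne.some⟩
  have hs_card : (0 : ℝ) < #s.toFinset := by
    exact_mod_cast card_pos.2 (Set.toFinset_nonempty.2 hs_ne)
  rwa [inv_mul_le_iff₀ hcard, ← mul_assoc, ← div_eq_mul_inv, div_mul_eq_mul_div,
    le_div_iff₀ hs_card]

-- `x 0` is the tested byte and `x i.succ.castSucc`, `i : Fin h`, is its horizon `x 1, …, x h`.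
def failsMatching (h : ℕ) : Set (Fin (h + 2) → Fin 256) :=
  {x | (x 0 : ℕ) < univ.sup fun i : Fin h ↦ (x i.succ.castSucc : ℕ)}

theorem failsMatching_nonempty {h : ℕ} (hh : h ≠ 0) : (failsMatching h).Nonempty := by
  refine ⟨Function.update (fun _ ↦ 255) 0 0, ?_⟩
  simp only [failsMatching, Set.mem_ofPred_eq, Function.update_self, Finset.lt_sup_iff]
  exact ⟨⟨0, Nat.pos_of_ne_zero hh⟩, mem_univ _, by simp [Function.update_of_ne]⟩

theorem mem_failsMatching_of_le {h : ℕ} {x y : Fin (h + 2) → Fin 256}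
    (hx : x ∈ failsMatching h) (hxy : ∀ i ≠ 0, x i ≤ y i) (hy : y 0 ≤ x 0) :
    y ∈ failsMatching h :=
  (Nat.lt_of_le_of_lt hy hx).trans_le (sup_mono_fun fun (i : Fin h) _ ↦ hxy _ (by simp))

/-- **Conditioning on a failed matching condition shifts expectations upwards.**
Let `h ≥ 2` and let `B₁, …, B_{h+2}` be independent random variables, each uniform on
`{0, …, 255}` (encoded as the family `B : Fin (h+2) → Ω → Fin 256`, with `B 0 = B₁`,
`B 1 = B₂`, `B i.succ.castSucc = B_{i+2}` and `B i.succ.succ = B_{i+3}` for `i : Fin h`;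
so the horizon of `B₁` is `B₂, …, B_{h+1}` and the shifted horizon is `B₃, …, B_{h+2}`).
Conditioning on the event `A = {B₁ < max {B₂, …, B_{h+1}}}` that `B₁` fails the matching
condition shifts expectations towards higher values:
`E(B₂ ∣ A) ≥ E(B₂) = 255/2` and
`E(max {B₃, …, B_{h+2}} ∣ A) ≥ E(max {B₃, …, B_{h+2}})`. -/
theorem ae_cond_fail_shifts_expectation {Ω : Type*} [MeasurableSpace Ω] (μ : Measure Ω)
    [IsProbabilityMeasure μ]
    (h : ℕ) (hh : 2 ≤ h) (B : Fin (h + 2) → Ω → Fin 256)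
    (hmeas : ∀ i, Measurable (B i))
    (hindep : iIndepFun B μ)
    (hunif : ∀ i (k : Fin 256), μ {ω | B i ω = k} = 1 / 256) :
    (∫ ω, ((B 1 ω : ℕ) : ℝ) ∂μ = 255 / 2) ∧
    (∫ ω, ((B 1 ω : ℕ) : ℝ) ∂μ
        ≤ ∫ ω, ((B 1 ω : ℕ) : ℝ)
            ∂μ[|{ω | (B 0 ω : ℕ)
                  < Finset.univ.sup fun i : Fin h => (B i.succ.castSucc ω : ℕ)}]) ∧
    (∫ ω, (((Finset.univ.sup fun i : Fin h => (B i.succ.succ ω : ℕ)) : ℕ) : ℝ) ∂μ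
        ≤ ∫ ω, (((Finset.univ.sup fun i : Fin h => (B i.succ.succ ω : ℕ)) : ℕ) : ℝ)
            ∂μ[|{ω | (B 0 ω : ℕ)
                  < Finset.univ.sup fun i : Fin h => (B i.succ.castSucc ω : ℕ)}]) := by
  have hmarg : ∀ i, μ.map (B i) = uniformOn Set.univ := fun i ↦
    map_eq_uniformOn_univ (hmeas i) fun k ↦ by simpa [Set.preimage] using hunif i k
  have hlaw : μ.map (fun ω i ↦ B i ω) = uniformOn Set.univ :=
    hindep.map_fun_eq_uniformOn_univ hmeas hmarg
  have hT : Measurable fun ω i ↦ B i ω := measurable_pi_lambda _ hmeas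
  have hA := failsMatching_nonempty (by omega : h ≠ 0)
  have hevent : {ω | (B 0 ω : ℕ) < univ.sup fun i : Fin h ↦ (B i.succ.castSucc ω : ℕ)}
      = (fun ω i ↦ B i ω) ⁻¹' failsMatching h := rfl
  rw [hevent]
  refine ⟨?_, ?_, ?_⟩
  · rw [← integral_map (f := fun k : Fin 256 ↦ ((k : ℕ) : ℝ)) (hmeas 1).aemeasurable
      (measurable_of_countable _).aestronglyMeasurable, hmarg 1,
      integral_fin_val_uniformOn_univ 255]
    norm_num
  · exact integral_comp_le_integral_comp_cond_of_reversed_coord hT hlaw 0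
      (f := fun x ↦ ((x 1 : ℕ) : ℝ)) (fun _ ↦ by positivity)
      (fun x y hxy ↦ Nat.cast_le.2 (hxy 1)) (fun x a ↦ by simp [Function.update_of_ne]) hA
      fun x hx y ↦ mem_failsMatching_of_le hx
  · exact integral_comp_le_integral_comp_cond_of_reversed_coord hT hlaw 0
      (f := fun x ↦ ((univ.sup fun i : Fin h ↦ (x i.succ.succ : ℕ) : ℕ) : ℝ))
      (fun _ ↦ by positivity)
      (fun x y hxy ↦ Nat.cast_le.2 (sup_mono_fun fun (i : Fin h) _ ↦ hxy i.succ.succ))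
      (fun x a ↦ by simp [Function.update_of_ne]) hA fun x hx y ↦ mem_failsMatching_of_le hx
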